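/- Let μ > 0, α > 0, N ≥ 1, and ω > α²/N². Set ζ = (1/(μ√ω)) arctanh(α/(N√ω)) and define on each halfline ψ_j(x) = φ_ω(x + ζ) for j = 1,…,N, where φ_ω(x) = [(μ+1)ω]^{1/(2μ)} sech^{1/μ}(μ√ω x). Then the Kirchhoff-delta vertex condition Σ_{j=1}^N ψ_j'(0) = −α ψ_1(0) holds. -/

import Mathlib

open Real

/-- The soliton profile `φ_ω(x) = ((μ+1)ω)^(1/(2μ)) sech^(1/μ)(μ√ω x)`. -/
noncomputable def phi (μ ω : ℝ) (x : ℝ) : ℝ :=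
  ((μ + 1) * ω) ^ (1 / (2 * μ)) * Real.cosh (μ * Real.sqrt ω * x) ^ (-(1 / μ))

/-- The inverse hyperbolic tangent, `arctanh s = (1/2) log((1+s)/(1-s))`. -/
noncomputable def arctanh (s : ℝ) : ℝ := (1 / 2) * Real.log ((1 + s) / (1 - s))

/-!
The soliton satisfies `φ_ω' = -√ω tanh(μ√ω x) φ_ω`, so on the shifted profile the vertex
condition reads `N √ω tanh(μ√ω ζ) = α`; the shift `ζ` is chosen exactly so that
`tanh(μ√ω ζ) = α / (N√ω)`, which lies in `(0, 1)` because `ω > α²/N²`.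
-/

theorem arctanh_eq_artanh {s : ℝ} (hs : s ∈ Set.Icc (-1) 1) : arctanh s = Real.artanh s :=
  (Real.artanh_eq_half_log hs).symm

theorem tanh_arctanh {s : ℝ} (hs : s ∈ Set.Ioo (-1) 1) : Real.tanh (arctanh s) = s := by
  rw [arctanh_eq_artanh (Set.Ioo_subset_Icc_self hs), Real.tanh_artanh hs]

theorem hasDerivAt_phi {μ : ℝ} (hμ : μ ≠ 0) (ω x : ℝ) :
    HasDerivAt (phi μ ω) (-√ω * Real.tanh (μ * √ω * x) * phi μ ω x) x := by
  have hcosh : 0 < Real.cosh (μ * √ω * x) := Real.cosh_pos _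
  have hderiv := (((hasDerivAt_id x).const_mul (μ * √ω)).cosh.rpow_const
    (p := -(1 / μ)) (Or.inl hcosh.ne')).const_mul (((μ + 1) * ω) ^ (1 / (2 * μ)))
  refine (show HasDerivAt (phi μ ω) _ x from hderiv).congr_deriv ?_
  rw [id_eq, phi, Real.tanh_eq_sinh_div_cosh, Real.rpow_sub_one hcosh.ne']
  field_simp

theorem div_mul_sqrt_lt_one {a b ω : ℝ} (hb : 0 < b) (hω : a ^ 2 / b ^ 2 < ω) :
    a / (b * √ω) < 1 := by
  have hω0 : 0 < ω := lt_of_le_of_lt (by positivity) hω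
  have hsq : a ^ 2 < (b * √ω) ^ 2 := by
    rw [mul_pow, sq_sqrt hω0.le, mul_comm]
    exact (div_lt_iff₀ (by positivity)).mp hω
  rw [div_lt_one (by positivity)]
  exact lt_of_pow_lt_pow_left₀ 2 (by positivity) hsq

theorem symmetric_state_vertex_condition (μ α : ℝ) (N : ℕ) (hμ : 0 < μ) (hα : 0 < α)
    (hN : 1 ≤ N) (ω : ℝ) (hω : α ^ 2 / N ^ 2 < ω) :
    let ζ : ℝ := 1 / (μ * Real.sqrt ω) * arctanh (α / (N * Real.sqrt ω))
    ∑ _j ∈ Finset.range N, deriv (fun x => phi μ ω (x + ζ)) 0 = -α * phi μ ω (0 + ζ) := by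
  intro ζ
  have hN0 : (0 : ℝ) < N := by exact_mod_cast hN
  have hω0 : 0 < √ω := sqrt_pos.mpr (lt_of_le_of_lt (by positivity) hω)
  set s := α / (N * √ω) with hs
  have hs_mem : s ∈ Set.Ioo (-1) 1 :=
    ⟨by linarith [show 0 < s by positivity], div_mul_sqrt_lt_one hN0 hω⟩
  have hζ : μ * √ω * ζ = arctanh s := by
    rw [← mul_assoc, mul_one_div_cancel (by positivity), one_mul]
  rw [Finset.sum_const, Finset.card_range, nsmul_eq_mul, deriv_comp_add_const, zero_add,
    (hasDerivAt_phi hμ.ne' ω ζ).deriv, hζ, tanh_arctanh hs_mem, hs]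
  field_simp
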